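/- arXiv:1404.7531 — 2 statements merged into one kernel-verified Lean document; each statement's English description precedes it below -/
import Mathlib

section
/- Let 𝔬 be an acyclic orientation of a finite simple graph G with vertex set V of size n, and let ω : V → {1,…,n} be a bijective labeling such that (a) ω is decreasing along directed paths: if there is a directed path from u to v then ω(u) > ω(v), and (b) sinks receive the smallest labels: every sink v (with s = number of sinks) satisfies ω(v) ≤ s. Let L'(𝔬,ω) be the set of permutations [ω(v_1),…,ω(v_n)] arising from orderings v_1,…,v_n of V such that whenever there is a directed path in 𝔬 from v_i to v_j then i < j. Then for each 1 ≤ k ≤ n, the number of permutations σ ∈ L'(𝔬,ω) with descent set Des(σ) = {1,2,…,n−k} equals C(s−1, k−1), where s = snk(𝔬) is the number of sinks of 𝔬. -/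
/-- A vertex is a sink of the orientation `r` if it has no outgoing directed edge. -/
def IsSink {V : Type} (r : V → V → Prop) (v : V) : Prop := ∀ u : V, ¬ r v u

/-- The descent set of a word `σ : Fin n → Fin n` (0-indexed). -/
def Des {n : ℕ} (σ : Fin n → Fin n) : Set ℕ :=
  {i | ∃ hi : i + 1 < n, σ ⟨i + 1, hi⟩ < σ ⟨i, Nat.lt_of_succ_lt hi⟩}

/-- `σ` belongs to `L'(𝔬, ω)`: reading the vertices `ω.symm (σ 0), …, ω.symm (σ (n-1))` gives
an ordering of `V` such that whenever there is a directed path from `ω.symm (σ i)` to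
`ω.symm (σ j)` in the orientation `r`, we have `i < j`. -/
def InLE {V : Type} {n : ℕ} (r : V → V → Prop) (ω : V ≃ Fin n) (σ : Equiv.Perm (Fin n)) :
    Prop :=
  ∀ i j : Fin n, Relation.TransGen r (ω.symm (σ i)) (ω.symm (σ j)) → i < j

/-!
Read a permutation with descent set `{0, …, p - 1}` as a word: it decreases down to its
minimum `0` at position `p` and increases afterwards, so it is determined by the set `T` of
values it takes after `p`, an arbitrary `(n - 1 - p)`-subset of `Fin n` avoiding `0`. Since `ω`
decreases along directed paths, such a word lies in `L'(𝔬, ω)` exactly when every value in `T`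
labels a sink: a vertex in the increasing tail with an out-neighbour would have to precede it
while carrying a larger label, and conversely a path that goes backwards in the word either
starts at a sink or runs against the decreasing prefix. As the sinks carry precisely the labels
`0, …, s - 1`, the admissible `T` are the `(k - 1)`-subsets of `{1, …, s - 1}`.
-/

open Finset Equiv

theorem Fin.val_orderSucc_of_not_isMax {n : ℕ} {a : Fin n} (ha : ¬IsMax a) :
    ((Order.succ a : Fin n) : ℕ) = a + 1 := by
  obtain ⟨b, hab⟩ := not_isMax_iff.mp ha
  have ha1 : (a : ℕ) + 1 < n := by omega
  have hle : ((Order.succ a : Fin n) : ℕ) ≤ a + 1 :=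
    Order.succ_le_of_lt (show a < ⟨a + 1, ha1⟩ from Fin.lt_def.mpr a.val.lt_succ_self)
  exact le_antisymm hle (Fin.lt_def.mp (Order.lt_succ_of_not_isMax ha))

theorem mem_des_iff_of_not_isMax {n : ℕ} {f : Fin n → Fin n} {a : Fin n} (ha : ¬IsMax a) :
    (a : ℕ) ∈ Des f ↔ f (Order.succ a) < f a := by
  have hsucc := Fin.val_orderSucc_of_not_isMax ha
  have hlt : (a : ℕ) + 1 < n := hsucc ▸ (Order.succ a).isLt
  rw [show Order.succ a = ⟨a + 1, hlt⟩ from Fin.ext hsucc]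
  exact ⟨fun ⟨_, h⟩ => h, fun h => ⟨hlt, h⟩⟩

def IsVShaped {n : ℕ} (f : Fin n → Fin n) (p : Fin n) : Prop :=
  StrictAntiOn f (Set.Iic p) ∧ StrictMonoOn f (Set.Ici p)

theorem des_eq_iff_isVShaped {n : ℕ} {f : Fin n → Fin n} (hf : Function.Injective f)
    (p : Fin n) : Des f = {i | i < (p : ℕ)} ↔ IsVShaped f p := by
  constructor
  · intro h
    refine ⟨strictAntiOn_of_succ_lt Set.ordConnected_Iic fun a ha _ hsa => ?_,
      strictMonoOn_of_lt_succ Set.ordConnected_Ici fun a ha hpa _ => ?_⟩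
    · rw [← mem_des_iff_of_not_isMax ha, h]
      exact Fin.lt_def.mp ((Order.lt_succ_of_not_isMax ha).trans_le hsa)
    · refine lt_of_le_of_ne (not_lt.mp fun hlt => ?_) (hf.ne (Order.lt_succ_of_not_isMax ha).ne)
      have hdes := (mem_des_iff_of_not_isMax ha).mpr hlt
      rw [h] at hdes
      exact (Fin.lt_def.mpr hdes).not_ge hpa
  · rintro ⟨hanti, hmono⟩
    ext i
    constructor
    · rintro ⟨hi, hlt⟩
      by_contra hip
      change ¬ i < p at hip
      exact hlt.not_gt (hmono (show (p : ℕ) ≤ i by omega) (show (p : ℕ) ≤ i + 1 by omega)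
        (Fin.mk_lt_mk.mpr i.lt_succ_self))
    · intro (hip : i < p)
      exact ⟨by omega, hanti (show i ≤ (p : ℕ) by omega) (show i + 1 ≤ (p : ℕ) by omega)
        (Fin.mk_lt_mk.mpr i.lt_succ_self)⟩

namespace Equiv.Perm

variable {n : ℕ}

def valuesAfter (σ : Perm (Fin n)) (p : Fin n) : Finset (Fin n) :=
  (Ioi p).map σ.toEmbedding

theorem mem_valuesAfter {σ : Perm (Fin n)} {p x : Fin n} :
    x ∈ σ.valuesAfter p ↔ p < σ.symm x := by
  rw [valuesAfter, mem_map_equiv, mem_Ioi]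

theorem apply_mem_valuesAfter {σ : Perm (Fin n)} {p i : Fin n} :
    σ i ∈ σ.valuesAfter p ↔ p < i := by
  rw [mem_valuesAfter, symm_apply_apply]

theorem card_valuesAfter (σ : Perm (Fin n)) (p : Fin n) : #(σ.valuesAfter p) = n - 1 - p := by
  rw [valuesAfter, card_map, Fin.card_Ioi]

end Equiv.Perm

section VShaped

variable {n : ℕ} {p : Fin n}

theorem card_compl_eq_of_card_eq {T : Finset (Fin n)} (hT : #T = n - 1 - p) : #Tᶜ = p + 1 := by
  rw [card_compl, hT, Fintype.card_fin]
  omega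

variable (p) in
def vShapedFun (T : Finset (Fin n)) (hT : #T = n - 1 - p) (i : Fin n) : Fin n :=
  if h : i ≤ p then Tᶜ.orderEmbOfFin (card_compl_eq_of_card_eq hT) ⟨p - i, by omega⟩
  else T.orderEmbOfFin hT ⟨i - p - 1, by omega⟩

variable {T : Finset (Fin n)} {hT : #T = n - 1 - p} {i : Fin n}

theorem vShapedFun_of_le (h : i ≤ p) :
    vShapedFun p T hT i = Tᶜ.orderEmbOfFin (card_compl_eq_of_card_eq hT) ⟨p - i, by omega⟩ :=
  dif_pos h

theorem vShapedFun_of_lt (h : p < i) :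
    vShapedFun p T hT i = T.orderEmbOfFin hT ⟨i - p - 1, by omega⟩ :=
  dif_neg h.not_ge

theorem vShapedFun_mem_compl (h : i ≤ p) : vShapedFun p T hT i ∈ Tᶜ := by
  rw [vShapedFun_of_le h]
  exact orderEmbOfFin_mem _ _ _

theorem vShapedFun_mem (h : p < i) : vShapedFun p T hT i ∈ T := by
  rw [vShapedFun_of_lt h]
  exact orderEmbOfFin_mem _ _ _

theorem IsVShaped.eq_vShapedFun {σ : Perm (Fin n)} (hσ : IsVShaped σ p) :
    ⇑σ = vShapedFun p (σ.valuesAfter p) (σ.card_valuesAfter p) := by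
  funext i
  rcases le_or_gt i p with hi | hi
  · have hinit := orderEmbOfFin_unique (card_compl_eq_of_card_eq (σ.card_valuesAfter p))
      (f := fun l : Fin (p + 1) => σ ⟨p - l, by omega⟩)
      (fun l => mem_compl.mpr <|
        Perm.apply_mem_valuesAfter.not.mpr (show ¬ (p : ℕ) < p - l by omega))
      (fun l₁ l₂ (hl : (l₁ : ℕ) < l₂) => hσ.1 (Fin.mk_le_of_le_val (by omega))
        (Fin.mk_le_of_le_val (by omega)) (Fin.mk_lt_mk.mpr (by omega)))
    rw [vShapedFun_of_le hi, ← hinit]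
    exact congrArg σ (Fin.ext (show (i : ℕ) = p - (p - i) by omega))
  · have htail := orderEmbOfFin_unique (σ.card_valuesAfter p)
      (f := fun l : Fin (n - 1 - p) => σ ⟨p + 1 + l, by omega⟩)
      (fun l => Perm.apply_mem_valuesAfter.mpr (show (p : ℕ) < p + 1 + l by omega))
      (fun l₁ l₂ (hl : (l₁ : ℕ) < l₂) => hσ.2 (show (p : ℕ) ≤ p + 1 + l₁ by omega)
        (show (p : ℕ) ≤ p + 1 + l₂ by omega) (Fin.mk_lt_mk.mpr (by omega)))
    rw [vShapedFun_of_lt hi, ← htail]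
    exact congrArg σ (Fin.ext (show (i : ℕ) = p + 1 + (i - p - 1) by omega))

variable [NeZero n]

theorem IsVShaped.apply_eq_zero {σ : Perm (Fin n)} (hσ : IsVShaped σ p) : σ p = 0 := by
  have hq := σ.apply_symm_apply 0
  rcases lt_trichotomy (σ.symm 0) p with h | h | h
  · have := hσ.1 (Set.mem_Iic.mpr h.le) (Set.mem_Iic.mpr le_rfl) h
    exact absurd (hq ▸ this) (Fin.zero_le _).not_gt
  · rwa [h] at hq
  · have := hσ.2 (Set.mem_Ici.mpr le_rfl) (Set.mem_Ici.mpr h.le) h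
    exact absurd (hq ▸ this) (Fin.zero_le _).not_gt

theorem IsVShaped.zero_notMem_valuesAfter {σ : Perm (Fin n)} (hσ : IsVShaped σ p) :
    0 ∉ σ.valuesAfter p := by
  rw [← hσ.apply_eq_zero, Perm.apply_mem_valuesAfter]
  exact lt_irrefl p

theorem vShapedFun_self (h0 : 0 ∉ T) : vShapedFun p T hT p = 0 := by
  rw [vShapedFun_of_le le_rfl]
  simp_rw [Nat.sub_self]
  rw [orderEmbOfFin_zero _ (Nat.succ_pos _)]
  exact nonpos_iff_eq_zero.mp (min'_le _ _ (mem_compl.mpr h0))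

theorem isVShaped_vShapedFun (h0 : 0 ∉ T) : IsVShaped (vShapedFun p T hT) p := by
  constructor
  · intro i (hi : i ≤ p) j (hj : j ≤ p) hij
    rw [vShapedFun_of_le hi, vShapedFun_of_le hj]
    exact (orderEmbOfFin _ _).strictMono (Fin.mk_lt_mk.mpr (by omega))
  · intro i hi j hj hij
    rw [vShapedFun_of_lt (lt_of_le_of_lt hi hij)]
    rcases (Set.mem_Ici.mp hi).eq_or_lt with rfl | hpi
    · rw [vShapedFun_self h0, Fin.pos_iff_ne_zero']
      exact ne_of_mem_of_not_mem (orderEmbOfFin_mem _ _ _) h0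
    · rw [vShapedFun_of_lt hpi]
      exact (orderEmbOfFin _ _).strictMono (Fin.mk_lt_mk.mpr (by omega))

theorem vShapedFun_injective (h0 : 0 ∉ T) : Function.Injective (vShapedFun p T hT) := by
  have hV := isVShaped_vShapedFun (hT := hT) h0
  intro i j hij
  rcases le_or_gt i p with hi | hi <;> rcases le_or_gt j p with hj | hj
  · exact hV.1.injOn hi hj hij
  · exact absurd (vShapedFun_mem hj) (mem_compl.mp (hij ▸ vShapedFun_mem_compl hi))
  · exact absurd (hij ▸ vShapedFun_mem hi) (mem_compl.mp (vShapedFun_mem_compl hj))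
  · exact hV.2.injOn hi.le hj.le hij

variable (p) in
noncomputable def vShapedPerm (T : Finset (Fin n)) (hT : #T = n - 1 - p) (h0 : 0 ∉ T) :
    Perm (Fin n) :=
  .ofBijective _ (Finite.injective_iff_bijective.mp (vShapedFun_injective (hT := hT) h0))

theorem valuesAfter_vShapedPerm (h0 : 0 ∉ T) : (vShapedPerm p T hT h0).valuesAfter p = T := by
  refine eq_of_subset_of_card_le (fun x hx => ?_) (by rw [Perm.card_valuesAfter, hT])
  rw [Perm.mem_valuesAfter] at hx
  rw [← (vShapedPerm p T hT h0).apply_symm_apply x]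
  exact vShapedFun_mem hx

end VShaped

section Orientation

variable {n : ℕ} {V : Type} {r : V → V → Prop} {ω : V ≃ Fin n}

theorem inLE_iff_of_isVShaped
    (hdec : ∀ u v : V, Relation.TransGen r u v → (ω v : ℕ) < (ω u : ℕ))
    {σ : Perm (Fin n)} {p : Fin n} (hσ : IsVShaped σ p) :
    InLE r ω σ ↔ ∀ x ∈ σ.valuesAfter p, IsSink r (ω.symm x) := by
  constructor
  · intro h x hx u hu
    have hpx := Perm.mem_valuesAfter.mp hx
    have hxu : σ.symm x < σ.symm (ω u) :=
      h _ _ (by simpa using Relation.TransGen.single hu)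
    have hlt := hσ.2 (Set.mem_Ici.mpr hpx.le) (Set.mem_Ici.mpr (hpx.trans hxu).le) hxu
    have hgt := hdec _ _ (Relation.TransGen.single hu)
    simp only [Equiv.apply_symm_apply] at hlt hgt
    exact hgt.not_gt hlt
  · intro h i j hpath
    by_contra! hji
    have hlt := hdec _ _ hpath
    simp only [Equiv.apply_symm_apply] at hlt
    rcases le_or_gt i p with hi | hi
    · exact (hσ.1.antitoneOn (hji.trans hi) hi hji).not_gt hlt
    · obtain ⟨c, hc, -⟩ := Relation.TransGen.head'_iff.mp hpath
      exact h _ (Perm.apply_mem_valuesAfter.mpr hi) c hc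

theorem isSink_symm_iff {s : ℕ} (hs : s = Nat.card {v : V // IsSink r v})
    (hmin : ∀ v : V, IsSink r v → (ω v : ℕ) < s) (x : Fin n) :
    IsSink r (ω.symm x) ↔ (x : ℕ) < s := by
  refine ⟨fun h => by simpa using hmin _ h, fun hx => ?_⟩
  have : Finite V := .of_equiv _ ω.symm
  let f : {v : V // IsSink r v} → Fin s := fun v => ⟨ω v, hmin v v.2⟩
  have hf : Function.Injective f := fun a b hab =>
    Subtype.ext (ω.injective (Fin.ext (Fin.mk.inj_iff.mp hab)))
  obtain ⟨v, hv⟩ := (hf.bijective_of_nat_card_le (by simp [hs])).2 ⟨x, hx⟩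
  rw [← show ω v = x from Fin.ext (Fin.mk.inj_iff.mp hv), Equiv.symm_apply_apply]
  exact v.2

end Orientation

section Counting

variable {n : ℕ} [NeZero n]

noncomputable def vShapedEquiv (p : Fin n) :
    {σ : Perm (Fin n) // Des σ = {i | i < (p : ℕ)}} ≃
      {T : Finset (Fin n) // 0 ∉ T ∧ #T = n - 1 - p} where
  toFun σ := ⟨σ.1.valuesAfter p,
    ((des_eq_iff_isVShaped σ.1.injective p).mp σ.2).zero_notMem_valuesAfter,
    σ.1.card_valuesAfter p⟩
  invFun T := ⟨vShapedPerm p T.1 T.2.2 T.2.1,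
    (des_eq_iff_isVShaped (Equiv.injective _) p).mpr (isVShaped_vShapedFun T.2.1)⟩
  left_inv σ := Subtype.ext <| Equiv.ext <| congrFun
    ((des_eq_iff_isVShaped σ.1.injective p).mp σ.2).eq_vShapedFun.symm
  right_inv T := Subtype.ext (valuesAfter_vShapedPerm T.2.1)

theorem vShapedEquiv_apply_coe (p : Fin n)
    (σ : {σ : Perm (Fin n) // Des σ = {i | i < (p : ℕ)}}) :
    (vShapedEquiv p σ : Finset (Fin n)) = σ.1.valuesAfter p := rfl

theorem card_inLE_and_des_eq {V : Type} {r : V → V → Prop} {ω : V ≃ Fin n}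
    (hdec : ∀ u v : V, Relation.TransGen r u v → (ω v : ℕ) < (ω u : ℕ))
    {s : ℕ} (hs : s = Nat.card {v : V // IsSink r v})
    (hmin : ∀ v : V, IsSink r v → (ω v : ℕ) < s) (p : Fin n) :
    Nat.card {σ : Perm (Fin n) // InLE r ω σ ∧ Des σ = {i | i < (p : ℕ)}} =
      Nat.card {T : Finset (Fin n) //
        (0 ∉ T ∧ #T = n - 1 - p) ∧ ∀ x ∈ T, (x : ℕ) < s} := by
  refine Nat.card_congr <| (Equiv.subtypeSubtypeEquivSubtype And.right).symm.trans <|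
    ((vShapedEquiv p).subtypeEquiv fun σ => ?_).trans (Equiv.subtypeSubtypeEquivSubtypeInter _ _)
  rw [and_iff_left σ.2, vShapedEquiv_apply_coe,
    inLE_iff_of_isVShaped hdec ((des_eq_iff_isVShaped σ.1.injective p).mp σ.2)]
  exact forall₂_congr fun x _ => isSink_symm_iff hs hmin x

theorem card_finset_zero_notMem_forall_lt {s : ℕ} (hsn : s ≤ n) (j : ℕ) :
    Nat.card {T : Finset (Fin n) // (0 ∉ T ∧ #T = j) ∧ ∀ x ∈ T, (x : ℕ) < s} =
      (s - 1).choose j := by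
  let S : Finset (Fin n) := (Ioo 0 s).attachFin fun m hm => (mem_Ioo.mp hm).2.trans_le hsn
  have hmem (T : Finset (Fin n)) :
      ((0 ∉ T ∧ #T = j) ∧ ∀ x ∈ T, (x : ℕ) < s) ↔ T ∈ powersetCard j S := by
    simp only [mem_powersetCard, subset_iff, S, mem_attachFin, mem_Ioo, Nat.pos_iff_ne_zero,
      Fin.val_ne_zero_iff]
    grind
  calc _ = Nat.card {T // T ∈ powersetCard j S} := Nat.card_congr (.subtypeEquivRight hmem)
    _ = (s - 1).choose j := by
      rw [Nat.card_eq_finsetCard, card_powersetCard, card_attachFin, Nat.card_Ioo, Nat.sub_zero]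

end Counting

theorem stmt4_general {V : Type} (r : V → V → Prop)
    (n : ℕ) (ω : V ≃ Fin n)
    (hdec : ∀ u v : V, Relation.TransGen r u v → (ω v : ℕ) < (ω u : ℕ))
    (s : ℕ) (hs : s = Nat.card {v : V // IsSink r v})
    (hmin : ∀ v : V, IsSink r v → (ω v : ℕ) < s)
    (k : ℕ) (hk : 1 ≤ k) (hkn : k ≤ n) :
    Nat.card {σ : Equiv.Perm (Fin n) //
        InLE r ω σ ∧ Des (σ : Fin n → Fin n) = {i | i < n - k}} =
      Nat.choose (s - 1) (k - 1) := by
  have : NeZero n := ⟨by omega⟩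
  have : Finite V := .of_equiv _ ω.symm
  have hsn : s ≤ n :=
    hs ▸ (Finite.card_subtype_le _).trans_eq ((Nat.card_congr ω).trans (Nat.card_fin n))
  have hp : n - 1 - (n - k) = k - 1 := by omega
  rw [← hp, ← card_finset_zero_notMem_forall_lt hsn]
  exact card_inLE_and_des_eq hdec hs hmin ⟨n - k, by omega⟩

/-- Theorem 2 (key lemma): given an acyclic orientation `r` of a finite simple graph `G` on
`n` vertices with `s` sinks, and a bijective labeling `ω` decreasing along directed paths with
the sinks receiving the smallest labels, for each `1 ≤ k ≤ n` the number of permutations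
`σ ∈ L'(𝔬, ω)` with descent set `{1,…,n-k}` (0-indexed: `{0,…,n-k-1}`) is `C(s-1, k-1)`. -/
theorem stmt4 {V : Type} [Fintype V] (G : SimpleGraph V) (r : V → V → Prop)
    (h1 : ∀ u v : V, r u v → G.Adj u v)
    (h2 : ∀ u v : V, G.Adj u v → r u v ∨ r v u)
    (h3 : ∀ u v : V, ¬(r u v ∧ r v u))
    (hacyc : ∀ v : V, ¬ Relation.TransGen r v v)
    (n : ℕ) (hn : Fintype.card V = n) (ω : V ≃ Fin n)
    (hdec : ∀ u v : V, Relation.TransGen r u v → (ω v : ℕ) < (ω u : ℕ))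
    (s : ℕ) (hs : s = Nat.card {v : V // IsSink r v})
    (hmin : ∀ v : V, IsSink r v → (ω v : ℕ) < s)
    (k : ℕ) (hk : 1 ≤ k) (hkn : k ≤ n) :
    Nat.card {σ : Equiv.Perm (Fin n) //
        InLE r ω σ ∧ Des (σ : Fin n → Fin n) = {i | i < n - k}} =
      Nat.choose (s - 1) (k - 1) :=
  stmt4_general r n ω hdec s hs hmin k hk hkn
end

section
/- With the setup of the previous statement, if σ ∈ L'(𝔬,ω) has descent set {1,2,…,n−k}, then σ(n+1−k) = 1 and every label appearing in positions n+2−k, …, n of σ is the label of a sink of 𝔬. -/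
/-- If `σ ∈ L'(𝔬, ω)` has descent set `{1,…,n-k}` (0-indexed: `{0,…,n-k-1}`), then the entry
at position `n+1-k` (0-indexed: `n-k`) is the minimal label, and every label in a later
position is the label of a sink. -/
theorem stmt5 {V : Type} [Fintype V] (G : SimpleGraph V) (r : V → V → Prop)
    (h1 : ∀ u v : V, r u v → G.Adj u v)
    (h2 : ∀ u v : V, G.Adj u v → r u v ∨ r v u)
    (h3 : ∀ u v : V, ¬(r u v ∧ r v u))
    (hacyc : ∀ v : V, ¬ Relation.TransGen r v v)
    (n : ℕ) (hn : Fintype.card V = n) (ω : V ≃ Fin n)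
    (hdec : ∀ u v : V, Relation.TransGen r u v → (ω v : ℕ) < (ω u : ℕ))
    (s : ℕ) (hs : s = Nat.card {v : V // IsSink r v})
    (hmin : ∀ v : V, IsSink r v → (ω v : ℕ) < s)
    (k : ℕ) (hk : 1 ≤ k) (hkn : k ≤ n)
    (σ : Equiv.Perm (Fin n)) (hσ : InLE r ω σ)
    (hdes : Des (σ : Fin n → Fin n) = {i | i < n - k}) :
    σ ⟨n - k, by omega⟩ = ⟨0, by omega⟩ ∧
      ∀ i : Fin n, n - k < (i : ℕ) → IsSink r (ω.symm (σ i)) := by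

  have hnk : n - k < n := by omega
  have hA : ∀ i (h : i + 1 < n), i < n - k →
      σ ⟨i + 1, h⟩ < σ ⟨i, Nat.lt_of_succ_lt h⟩ := by
    intro i h hi
    have : i ∈ Des (σ : Fin n → Fin n) := by rw [hdes]; exact hi
    obtain ⟨hi', hlt⟩ := this
    exact hlt
  have hB : ∀ i (h : i + 1 < n), ¬ i < n - k →
      σ ⟨i, Nat.lt_of_succ_lt h⟩ < σ ⟨i + 1, h⟩ := by
    intro i h hi
    have hnot : i ∉ Des (σ : Fin n → Fin n) := by rw [hdes]; exact hi
    have hle : ¬ σ ⟨i + 1, h⟩ < σ ⟨i, Nat.lt_of_succ_lt h⟩ := fun hc => hnot ⟨h, hc⟩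
    have hne : σ ⟨i, Nat.lt_of_succ_lt h⟩ ≠ σ ⟨i + 1, h⟩ := by
      intro he
      have := σ.injective he
      simp [Fin.ext_iff] at this
    exact lt_of_le_of_ne (not_lt.mp hle) hne
  -- decreasing chain on [0, n-k]
  have hdecC : ∀ b (hb : b ≤ n - k), ∀ a (ha : a < b),
      σ ⟨b, by omega⟩ < σ ⟨a, by omega⟩ := by
    intro b
    induction b with
    | zero => intro _ a ha; omega
    | succ b ih =>
      intro hb a ha
      have hstep : σ ⟨b + 1, by omega⟩ < σ ⟨b, by omega⟩ := hA b (by omega) (by omega)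
      rcases Nat.lt_or_ge a b with h' | h'
      · exact hstep.trans (ih (by omega) a h')
      · have : a = b := by omega
        subst this; exact hstep
  -- increasing chain on [n-k, n)
  have hincC : ∀ b (hb : b < n), ∀ a (ha1 : n - k ≤ a) (ha2 : a < b),
      σ ⟨a, by omega⟩ < σ ⟨b, hb⟩ := by
    intro b
    induction b with
    | zero => intro _ a _ ha; omega
    | succ b ih =>
      intro hb a h1 h2
      have hstep : σ ⟨b, by omega⟩ < σ ⟨b + 1, hb⟩ := hB b hb (by omega)
      rcases Nat.lt_or_ge a b with h' | h'
      · exact (ih (by omega) a h1 h').trans hstep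
      · have : a = b := by omega
        subst this; exact hstep
  constructor
  · -- σ ⟨n-k⟩ is the minimum, hence 0
    have hmin' : ∀ m : Fin n, σ ⟨n - k, hnk⟩ ≤ σ m := by
      intro m
      rcases Nat.lt_trichotomy (m : ℕ) (n - k) with h | h | h
      · have := hdecC (n - k) le_rfl m h
        have hm : (⟨(m : ℕ), m.isLt⟩ : Fin n) = m := rfl
        rw [hm] at this
        exact this.le
      · have : (⟨n - k, hnk⟩ : Fin n) = m := by
          apply Fin.ext; simp [h]
        rw [this]
      · have := hincC m m.isLt (n - k) le_rfl h
        have hm : (⟨(m : ℕ), m.isLt⟩ : Fin n) = m := rfl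
        rw [hm] at this
        exact this.le
    have h0 := hmin' (σ.symm ⟨0, by omega⟩)
    rw [Equiv.apply_symm_apply] at h0
    apply Fin.ext
    have := Fin.le_iff_val_le_val.mp h0
    simpa using this
  · intro i hi
    intro u hru
    have hv : Relation.TransGen r (ω.symm (σ i)) u := Relation.TransGen.single hru
    set j := σ.symm (ω u) with hj
    have hju : ω.symm (σ j) = u := by rw [hj, Equiv.apply_symm_apply, Equiv.symm_apply_apply]
    have hij : i < j := hσ i j (by rw [hju]; exact hv)
    have hlab : (ω u : ℕ) < ((ω (ω.symm (σ i))) : ℕ) := hdec _ _ hv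
    rw [Equiv.apply_symm_apply] at hlab
    have hσij : σ i < σ j := by
      have := hincC (j : ℕ) j.isLt (i : ℕ) (by omega) hij
      simpa using this
    have hσj : σ j = ω u := by rw [hj, Equiv.apply_symm_apply]
    rw [hσj] at hσij
    have := Fin.lt_iff_val_lt_val.mp hσij
    omega
end
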